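/- arXiv:1405.7126 — 2 statements merged into one kernel-verified Lean document; each statement's English description precedes it below -/
import Mathlib

section
/- Let E be an n-dimensional complex evolution algebra with natural basis {e_1,...,e_n}, structure matrix A = (a_{ij}) (so e_i·e_i = Σ_j a_{ij} e_j), with e_i² ≠ 0 for 1 ≤ i ≤ k and e_i² = 0 for i > k. If rank(A) < k, then E does not satisfy condition P: there exists a nonzero element x which is a linear combination of at most k of the e_i with x·x = 0, such that {x} cannot be extended to a natural basis of E. -/
/-!
Since `rank A < k`, the first `k` rows of `A` are linearly dependent: `∑ cᵢ Aᵢ = 0` for some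
`c ≠ 0` supported on `i < k`. Choosing `xᵢ` with `xᵢ² = cᵢ` gives `x·x = ∑ cᵢ eᵢ² = 0`. If `x` lay
in a natural basis, it would annihilate every basis vector, hence all of `E` by linearity; but
`x·eᵢ = xᵢ eᵢ² ≠ 0` for any `i` with `cᵢ ≠ 0`.
-/

open scoped BigOperators

/-- Evolution-algebra multiplication on `Fin n → ℂ` with structure matrix `A`. -/
noncomputable def evMul {n : ℕ} (A : Matrix (Fin n) (Fin n) ℂ) (x y : Fin n → ℂ) : Fin n → ℂ :=
  fun j => ∑ i, x i * y i * A i j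

open Matrix

theorem Matrix.exists_vecMul_eq_zero_of_rank_lt_card {K m n : Type*} [Field K] [Fintype m]
    [Fintype n] (A : Matrix m n K) (s : Finset m) (h : A.rank < s.card) :
    ∃ c : m → K, c ≠ 0 ∧ (∀ i, c i ≠ 0 → i ∈ s) ∧ c ᵥ* A = 0 := by
  have hdep : ¬ LinearIndepOn K A.row (s : Set m) := fun hli => by
    have hcard := linearIndependent_iff_card_eq_finrank_span.mp hli.linearIndependent
    simp only [Finset.coe_sort_coe, Fintype.card_coe] at hcard
    apply h.not_ge
    rw [hcard, rank_eq_finrank_span_row]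
    exact Submodule.finrank_mono (Submodule.span_mono (Set.range_comp_subset_range _ _))
  obtain ⟨l, hls, hl, hl0⟩ := linearDepOn_iff'.mp hdep
  refine ⟨l, by rwa [Ne, Finsupp.coe_eq_zero], fun i hi => hls (by simpa using hi), ?_⟩
  rw [Finsupp.linearCombination_apply, Finsupp.sum_fintype _ _ (by simp)] at hl
  rwa [vecMul_eq_sum]

section EvolutionAlgebra

variable {n : ℕ} (A : Matrix (Fin n) (Fin n) ℂ)

theorem evMul_eq_vecMul (x y : Fin n → ℂ) : evMul A x y = (x * y) ᵥ* A := rfl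

theorem evMul_single_one (x : Fin n → ℂ) (i : Fin n) :
    evMul A x (Pi.single i 1) = x i • A i := by
  rw [evMul_eq_vecMul, ← Pi.single_mul_right, mul_one, single_vecMul]
  rfl

theorem evMul_eq_zero_of_span_eq_top {x : Fin n → ℂ} {t : Set (Fin n → ℂ)}
    (hspan : Submodule.span ℂ t = ⊤) (h : ∀ u ∈ t, evMul A x u = 0) (y : Fin n → ℂ) :
    evMul A x y = 0 :=
  LinearMap.congr_fun (LinearMap.ext_on hspan (f := A.vecMulLinear ∘ₗ LinearMap.mulLeft ℂ x)
    (g := 0) h) y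

theorem evMul_eq_zero_of_mem_natural_basis {x : Fin n → ℂ} {t : Set (Fin n → ℂ)}
    (hxx : evMul A x x = 0) (hxt : x ∈ t) (hspan : Submodule.span ℂ t = ⊤)
    (horth : ∀ u ∈ t, ∀ v ∈ t, u ≠ v → evMul A u v = 0) (y : Fin n → ℂ) :
    evMul A x y = 0 :=
  evMul_eq_zero_of_span_eq_top A hspan
    (fun u hu => if hxu : x = u then hxu ▸ hxx else horth x hxt u hu hxu) y

end EvolutionAlgebra

theorem stmt13_general (n k : ℕ) (hk : k ≤ n) (A : Matrix (Fin n) (Fin n) ℂ)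
    -- e_i² ≠ 0 for i < k and e_i² = 0 for i ≥ k
    (h1 : ∀ i : Fin n, (i : ℕ) < k → (fun j => A i j) ≠ 0)
    (hrank : A.rank < k) :
    ∃ x : Fin n → ℂ, x ≠ 0 ∧
      -- x is a linear combination of the e_i with i < k
      (∀ i : Fin n, x i ≠ 0 → (i : ℕ) < k) ∧
      -- x spans a one-dimensional subalgebra: x·x = 0,
      evMul A x x = 0 ∧
      -- but {x} cannot be extended to a natural basis of E
      ¬ ∃ t : Set (Fin n → ℂ), x ∈ t ∧
          LinearIndependent ℂ ((↑) : t → (Fin n → ℂ)) ∧ Submodule.span ℂ t = ⊤ ∧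
          (∀ u ∈ t, ∀ v ∈ t, u ≠ v → evMul A u v = 0) := by
  obtain ⟨c, hc0, hck, hcA⟩ := A.exists_vecMul_eq_zero_of_rank_lt_card {i : Fin n | i < k}
    (by rwa [Fin.card_filter_val_lt, min_eq_right hk])
  choose x hx using fun i => IsAlgClosed.exists_eq_mul_self (c i)
  have hxc (i : Fin n) : x i = 0 ↔ c i = 0 := by rw [hx, mul_self_eq_zero]
  have hxx : evMul A x x = 0 := by
    rwa [evMul_eq_vecMul, show x * x = c from funext fun i => (hx i).symm]
  obtain ⟨i, hci⟩ := Function.ne_iff.mp hc0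
  refine ⟨x, fun h => hci ((hxc i).1 (congrFun h i)),
    fun j hj => by simpa using hck j (mt (hxc j).2 hj), hxx, ?_⟩
  rintro ⟨t, hxt, -, hspan, horth⟩
  have hxi := evMul_eq_zero_of_mem_natural_basis A hxx hxt hspan horth (Pi.single i 1)
  rw [evMul_single_one, smul_eq_zero] at hxi
  exact hxi.elim (mt (hxc i).1 hci) (h1 i (by simpa using hck i hci))

theorem stmt13 (n k : ℕ) (hk : k ≤ n) (A : Matrix (Fin n) (Fin n) ℂ)
    -- e_i² ≠ 0 for i < k and e_i² = 0 for i ≥ k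
    (h1 : ∀ i : Fin n, (i : ℕ) < k → (fun j => A i j) ≠ 0)
    (h2 : ∀ i : Fin n, k ≤ (i : ℕ) → ∀ j, A i j = 0)
    (hrank : A.rank < k) :
    ∃ x : Fin n → ℂ, x ≠ 0 ∧
      -- x is a linear combination of the e_i with i < k
      (∀ i : Fin n, x i ≠ 0 → (i : ℕ) < k) ∧
      -- x spans a one-dimensional subalgebra: x·x = 0,
      evMul A x x = 0 ∧
      -- but {x} cannot be extended to a natural basis of E
      ¬ ∃ t : Set (Fin n → ℂ), x ∈ t ∧
          LinearIndependent ℂ ((↑) : t → (Fin n → ℂ)) ∧ Submodule.span ℂ t = ⊤ ∧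
          (∀ u ∈ t, ∀ v ∈ t, u ≠ v → evMul A u v = 0) :=
  stmt13_general n k hk A h1 hrank
end

section
/- An n-dimensional complex evolution algebra E is nilpotent if and only if, after a permutation of its natural basis, the matrix of structure constants A is strictly upper triangular (a_{ij} = 0 for j ≤ i). -/
/-!
If `σ` makes the structure matrix strictly upper triangular, then a product with a factor
vanishing on `e_{σ 0}, …, e_{σ (k-1)}` also vanishes on `e_{σ k}`; since every product in
`E^{2^k}` has a factor in `E^{2^(k-1)}`, the power `E^{2^n}` vanishes.

Conversely, if `a_{ij} ≠ 0` is read as an edge `i → j`, each edge raises the power of `E`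
reached: `u ∈ E^t` with `u_i ≠ 0` gives `u · e_i ∈ E^{t+1}` with `j`-th coordinate
`u_i a_{ij} ≠ 0`. So nilpotency forbids infinite paths, the reversed edge relation is
well founded, and listing the basis by decreasing rank makes every edge go forward.
-/

open scoped BigOperators

/-- Product of two subspaces: the span of all products. -/
noncomputable def mulSub {n : ℕ} (A : Matrix (Fin n) (Fin n) ℂ)
    (S T : Submodule ℂ (Fin n → ℂ)) : Submodule ℂ (Fin n → ℂ) :=
  Submodule.span ℂ {z | ∃ x ∈ S, ∃ y ∈ T, z = evMul A x y}

/-- `evPow A m` is `E^{m+1}`, where `E¹ = E` and `E^k = ∑_{i=1}^{k-1} E^i · E^{k-i}`. -/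
noncomputable def evPow {n : ℕ} (A : Matrix (Fin n) (Fin n) ℂ) : ℕ → Submodule ℂ (Fin n → ℂ)
  | 0 => ⊤
  | (m + 1) => ⨆ i : Fin (m + 1), mulSub A (evPow A i) (evPow A (m - (i : ℕ)))
  decreasing_by
  · exact i.isLt
  · omega

lemma evMul_comm {n : ℕ} (A : Matrix (Fin n) (Fin n) ℂ) (x y : Fin n → ℂ) :
    evMul A x y = evMul A y x := by
  funext j
  exact Finset.sum_congr rfl fun i _ => by ring

lemma evMul_single_apply {n : ℕ} (A : Matrix (Fin n) (Fin n) ℂ) (u : Fin n → ℂ)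
    (a b : Fin n) :
    evMul A u (Pi.single a 1) b = u a * A a b := by
  rw [evMul, Finset.sum_eq_single a]
  · simp
  · intro c _ hc
    simp [Pi.single_eq_of_ne hc]
  · simp

lemma evMul_mem_evPow_succ {n : ℕ} (A : Matrix (Fin n) (Fin n) ℂ) {m : ℕ}
    {u : Fin n → ℂ} (hu : u ∈ evPow A m) (y : Fin n → ℂ) :
    evMul A u y ∈ evPow A (m + 1) := by
  rw [evPow]
  refine le_iSup (fun i : Fin (m + 1) => mulSub A (evPow A i) (evPow A (m - (i : ℕ))))
    (Fin.last m) ?_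
  simp only [Fin.val_last, Nat.sub_self]
  exact Submodule.subset_span ⟨u, hu, y, by rw [evPow]; trivial, rfl⟩

section Triangular

variable {n : ℕ} (σ : Equiv.Perm (Fin n))

/-- The span of `e_{σ l}` for `l ≥ k`. -/
def supportedFrom (k : ℕ) : Submodule ℂ (Fin n → ℂ) where
  carrier := {x | ∀ l : Fin n, (l : ℕ) < k → x (σ l) = 0}
  add_mem' ha hb l hl := by simp [ha l hl, hb l hl]
  zero_mem' _ _ := rfl
  smul_mem' c _ ha l hl := by simp [ha l hl]

lemma supportedFrom_zero : supportedFrom σ 0 = ⊤ :=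
  eq_top_iff.2 fun _ _ _ hl => absurd hl (Nat.not_lt_zero _)

lemma supportedFrom_eq_bot : supportedFrom σ n = ⊥ := by
  refine eq_bot_iff.2 fun x hx => (Submodule.mem_bot ℂ).2 (funext fun j => ?_)
  simpa using hx (σ.symm j) (σ.symm j).isLt

variable {σ} {A : Matrix (Fin n) (Fin n) ℂ}

lemma evMul_mem_supportedFrom_succ (hA : ∀ i j : Fin n, j ≤ i → A (σ i) (σ j) = 0)
    {k : ℕ} {x : Fin n → ℂ} (hx : x ∈ supportedFrom σ k) (y : Fin n → ℂ) :
    evMul A x y ∈ supportedFrom σ (k + 1) := by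
  intro l hl
  refine Finset.sum_eq_zero fun i _ => ?_
  obtain ⟨i, rfl⟩ := σ.surjective i
  rcases lt_or_ge (i : ℕ) k with hi | hi
  · simp [hx i hi]
  · simp [hA i l (Fin.le_def.2 (by omega))]

lemma mulSub_le_supportedFrom_succ (hA : ∀ i j : Fin n, j ≤ i → A (σ i) (σ j) = 0)
    {k : ℕ} {S T : Submodule ℂ (Fin n → ℂ)}
    (h : S ≤ supportedFrom σ k ∨ T ≤ supportedFrom σ k) :
    mulSub A S T ≤ supportedFrom σ (k + 1) := by
  refine Submodule.span_le.2 ?_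
  rintro z ⟨x, hx, y, hy, rfl⟩
  rcases h with hS | hT
  · exact evMul_mem_supportedFrom_succ hA (hS hx) y
  · exact evMul_comm A x y ▸ evMul_mem_supportedFrom_succ hA (hT hy) x

lemma evPow_le_supportedFrom (hA : ∀ i j : Fin n, j ≤ i → A (σ i) (σ j) = 0)
    {m k : ℕ} (hk : 2 ^ k ≤ m + 1) :
    evPow A m ≤ supportedFrom σ k := by
  induction m using Nat.strong_induction_on generalizing k with
  | _ m ih =>
    cases k with
    | zero => exact supportedFrom_zero σ ▸ le_top
    | succ k =>
      have hpos : 1 ≤ 2 ^ k := Nat.one_le_two_pow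
      obtain ⟨m, rfl⟩ : ∃ m', m = m' + 1 := ⟨m - 1, by rw [pow_succ] at hk; omega⟩
      rw [evPow]
      refine iSup_le fun i => mulSub_le_supportedFrom_succ hA ?_
      -- the two factors of `E^{m+2}` have exponents summing to `m + 2 ≥ 2^(k+1)`
      rcases le_or_gt (2 ^ k) ((i : ℕ) + 1) with hi | hi
      · exact .inl (ih i (by omega) hi)
      · exact .inr (ih (m - i) (by omega) (by rw [pow_succ] at hk; omega))

lemma evPow_eq_bot_of_triangular (hA : ∀ i j : Fin n, j ≤ i → A (σ i) (σ j) = 0) :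
    evPow A (2 ^ n - 1) = ⊥ :=
  le_bot_iff.1 (supportedFrom_eq_bot σ ▸ evPow_le_supportedFrom hA
    (by have := @Nat.one_le_two_pow n; omega))

end Triangular

lemma exists_mem_evPow_apply_ne_zero {n : ℕ} {A : Matrix (Fin n) (Fin n) ℂ} {f : ℕ → Fin n}
    (hf : ∀ t, A (f t) (f (t + 1)) ≠ 0) (t : ℕ) : ∃ u ∈ evPow A t, u (f t) ≠ 0 := by
  induction t with
  | zero => exact ⟨Pi.single (f 0) 1, by rw [evPow]; trivial, by simp⟩
  | succ t ih =>
    obtain ⟨u, hu, hut⟩ := ih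
    refine ⟨evMul A u (Pi.single (f t) 1), evMul_mem_evPow_succ A hu _, ?_⟩
    rw [evMul_single_apply]
    exact mul_ne_zero hut (hf t)

lemma wellFounded_of_evPow_eq_bot {n m : ℕ} {A : Matrix (Fin n) (Fin n) ℂ}
    (hm : evPow A m = ⊥) : WellFounded fun a b => A b a ≠ 0 := by
  refine wellFounded_iff_isEmpty_descending_chain.2 ⟨fun ⟨f, hf⟩ => ?_⟩
  obtain ⟨u, hu, hum⟩ := exists_mem_evPow_apply_ne_zero hf m
  rw [hm, Submodule.mem_bot] at hu
  exact hum (congrFun hu _)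

lemma exists_perm_rel_imp_lt_of_wellFounded {n : ℕ} {r : Fin n → Fin n → Prop}
    (hr : WellFounded r) : ∃ σ : Equiv.Perm (Fin n), ∀ i j, r (σ i) (σ j) → j < i := by
  have : IsWellFounded (Fin n) r := ⟨hr⟩
  let rankDesc : Fin n → Ordinalᵒᵈ := fun i => OrderDual.toDual (IsWellFounded.rank r i)
  refine ⟨Tuple.sort rankDesc, fun i j hij => lt_of_not_ge fun hij' => ?_⟩
  exact (IsWellFounded.rank_lt_of_rel hij).not_ge (Tuple.monotone_sort rankDesc hij')

theorem stmt14 (n : ℕ) (A : Matrix (Fin n) (Fin n) ℂ) :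
    -- E is nilpotent (some power E^m vanishes) iff after a permutation of the
    -- natural basis the structure matrix is strictly upper triangular.
    (∃ m : ℕ, evPow A m = ⊥) ↔
      ∃ σ : Equiv.Perm (Fin n), ∀ i j : Fin n, j ≤ i → A (σ i) (σ j) = 0 := by
  constructor
  · rintro ⟨m, hm⟩
    obtain ⟨σ, hσ⟩ := exists_perm_rel_imp_lt_of_wellFounded (wellFounded_of_evPow_eq_bot hm)
    exact ⟨σ, fun i j hji => not_not.1 fun hij => (hσ j i hij).not_ge hji⟩
  · rintro ⟨σ, hA⟩
    exact ⟨_, evPow_eq_bot_of_triangular hA⟩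
end
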